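/- arXiv:1901.05781 — 2 statements merged into one kernel-verified Lean document; each statement's English description precedes it below -/
import Mathlib

section
/- Let (W,S) be a Coxeter system of finite rank and let t₁,…,t_n, t ∈ T be reflections. Then for every w in the subgroup ⟨t₁,…,t_n⟩ generated by t₁,…,t_n, the tuple (t₁,…,t_n, t, t) lies in the same Hurwitz orbit as (t₁,…,t_n, w t w⁻¹, w t w⁻¹). -/
/-- A single Hurwitz move: replace consecutive entries `(a, b)` by `(a * b * a⁻¹, a)`. -/
def HurwitzMove {W : Type*} [Group W] (l l' : List W) : Prop :=
  ∃ (u v : List W) (a b : W),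
    l = u ++ a :: b :: v ∧ l' = u ++ (a * b * a⁻¹) :: a :: v

/-- Two tuples lie in the same Hurwitz orbit iff one is obtained from the other by a finite
sequence of Hurwitz moves and their inverses. -/
def HurwitzEquiv {W : Type*} [Group W] : List W → List W → Prop :=
  Relation.ReflTransGen (fun x y => HurwitzMove x y ∨ HurwitzMove y x)

/-- A Coxeter element is a product of all the simple reflections, each occurring exactly
once, in some order. -/
def CoxeterSystem.IsCoxeterElement {B W : Type*} [Group W] {M : CoxeterMatrix B}
    (cs : CoxeterSystem M W) (c : W) : Prop :=
  ∃ l : List B, l.Nodup ∧ (∀ i : B, i ∈ l) ∧ c = (l.map cs.simple).prod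

/-!
Pushing a factor `a` to the right through a block `v` by Hurwitz moves conjugates `v` by `a`,
and pulling it back undoes this. So if `a` occurs in `ts`, we may bring `a` next to the pair
`(t, t)`, apply the three-strand identity `(a, t, t) ~ (a, ata⁻¹, ata⁻¹)` (valid since
`t² = 1`), and move `a` back to its place. The elements `w` for which the pair `(t, t)` can be
conjugated by `w` for every involution `t` form a subgroup, which therefore contains `⟨ts⟩`.
-/

section

variable {W : Type*} [Group W]

theorem hurwitzMove_cons_cons (a b : W) (v : List W) :
    HurwitzMove (a :: b :: v) (a * b * a⁻¹ :: a :: v) :=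
  ⟨[], v, a, b, rfl, rfl⟩

namespace HurwitzMove

variable {l l' : List W}

theorem append_left (h : HurwitzMove l l') (u : List W) : HurwitzMove (u ++ l) (u ++ l') := by
  obtain ⟨p, q, a, b, rfl, rfl⟩ := h
  exact ⟨u ++ p, q, a, b, by simp, by simp⟩

theorem append_right (h : HurwitzMove l l') (v : List W) : HurwitzMove (l ++ v) (l' ++ v) := by
  obtain ⟨p, q, a, b, rfl, rfl⟩ := h
  exact ⟨p, q ++ v, a, b, by simp, by simp⟩

theorem hurwitzEquiv (h : HurwitzMove l l') : HurwitzEquiv l l' :=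
  .single (.inl h)

end HurwitzMove

namespace HurwitzEquiv

variable {l l' l'' : List W}

theorem refl (l : List W) : HurwitzEquiv l l := Relation.ReflTransGen.refl

theorem trans (h : HurwitzEquiv l l') (h' : HurwitzEquiv l' l'') : HurwitzEquiv l l'' :=
  Relation.ReflTransGen.trans h h'

instance : Trans (HurwitzEquiv (W := W)) HurwitzEquiv HurwitzEquiv := ⟨trans⟩

theorem symm (h : HurwitzEquiv l l') : HurwitzEquiv l' l := by
  induction h with
  | refl => exact refl _
  | tail _ step ih => exact trans (.single step.symm) ih

theorem append_left (h : HurwitzEquiv l l') (u : List W) : HurwitzEquiv (u ++ l) (u ++ l') :=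
  Relation.ReflTransGen.lift (u ++ ·)
    (fun _ _ step => step.imp (·.append_left u) (·.append_left u)) _ _ h

theorem append_right (h : HurwitzEquiv l l') (v : List W) : HurwitzEquiv (l ++ v) (l' ++ v) :=
  Relation.ReflTransGen.lift (· ++ v)
    (fun _ _ step => step.imp (·.append_right v) (·.append_right v)) _ _ h

end HurwitzEquiv

theorem hurwitzEquiv_cons_map_conj_append (a : W) (v : List W) :
    HurwitzEquiv (a :: v) (v.map (fun x => a * x * a⁻¹) ++ [a]) := by
  induction v with
  | nil => exact .refl _
  | cons b v ih =>
    exact (hurwitzMove_cons_cons a b v).hurwitzEquiv.trans (ih.append_left [a * b * a⁻¹])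

theorem conj_mul_self_eq_one {t : W} (ht : t * t = 1) (a : W) :
    a * t * a⁻¹ * (a * t * a⁻¹) = 1 := by
  rw [conj_mul, ht, mul_one, mul_inv_cancel]

theorem hurwitzEquiv_triple_conj (a : W) {t : W} (ht : t * t = 1) :
    HurwitzEquiv [a, t, t] [a, a * t * a⁻¹, a * t * a⁻¹] := by
  set c := a * t * a⁻¹
  have hc : c * (c * a * c⁻¹) * c⁻¹ = a := by
    calc c * (c * a * c⁻¹) * c⁻¹ = (c * c) * a * (c * c)⁻¹ := by group
      _ = a := by rw [conj_mul_self_eq_one ht]; group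
  calc HurwitzEquiv [a, t, t] [c, a, t] := (hurwitzMove_cons_cons a t [t]).hurwitzEquiv
    HurwitzEquiv _ [c, c, a] :=
      ((hurwitzMove_cons_cons a t []).append_left [c]).hurwitzEquiv
    HurwitzEquiv _ [c, c * a * c⁻¹, c] :=
      ((hurwitzMove_cons_cons c a []).append_left [c]).hurwitzEquiv
    HurwitzEquiv _ [a, c, c] := by
      simpa only [hc] using (hurwitzMove_cons_cons c (c * a * c⁻¹) [c]).hurwitzEquiv

theorem hurwitzEquiv_append_pair_conj_of_mem {ts : List W} {a : W} (ha : a ∈ ts) {t : W}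
    (ht : t * t = 1) :
    HurwitzEquiv (ts ++ [t, t]) (ts ++ [a * t * a⁻¹, a * t * a⁻¹]) := by
  obtain ⟨u, v, rfl⟩ := List.append_of_mem ha
  set v' := v.map (fun x => a * x * a⁻¹)
  have push (p : List W) : HurwitzEquiv (u ++ a :: v ++ p) (u ++ v' ++ a :: p) := by
    simpa only [List.append_assoc, List.cons_append, List.singleton_append, List.nil_append] using
      ((hurwitzEquiv_cons_map_conj_append a v).append_right p).append_left u
  calc HurwitzEquiv (u ++ a :: v ++ [t, t]) (u ++ v' ++ [a, t, t]) := push _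
    HurwitzEquiv _ (u ++ v' ++ [a, a * t * a⁻¹, a * t * a⁻¹]) :=
      (hurwitzEquiv_triple_conj a ht).append_left _
    HurwitzEquiv _ (u ++ a :: v ++ [a * t * a⁻¹, a * t * a⁻¹]) := (push _).symm

def hurwitzPairConjSubgroup (ts : List W) : Subgroup W where
  carrier := {w | ∀ t : W, t * t = 1 →
    HurwitzEquiv (ts ++ [t, t]) (ts ++ [w * t * w⁻¹, w * t * w⁻¹])}
  one_mem' t _ := by simpa using HurwitzEquiv.refl (ts ++ [t, t])
  mul_mem' {x y} hx hy t ht := by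
    have h := hx _ (conj_mul_self_eq_one ht y)
    rw [show x * (y * t * y⁻¹) * x⁻¹ = x * y * t * (x * y)⁻¹ by group] at h
    exact (hy t ht).trans h
  inv_mem' {x} hx t ht := by
    have h := hx _ (conj_mul_self_eq_one ht x⁻¹)
    rw [show x * (x⁻¹ * t * x⁻¹⁻¹) * x⁻¹ = t by group] at h
    exact h.symm

theorem closure_le_hurwitzPairConjSubgroup (ts : List W) :
    Subgroup.closure {x | x ∈ ts} ≤ hurwitzPairConjSubgroup ts :=
  (Subgroup.closure_le _).2 fun _ ha _ ht => hurwitzEquiv_append_pair_conj_of_mem ha ht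

end

theorem hurwitzEquiv_append_pair_conj_general
    {B W : Type*} [Group W] {M : CoxeterMatrix B}
    (cs : CoxeterSystem M W) (ts : List W) (t : W)
    (ht : cs.IsReflection t)
    (w : W) (hw : w ∈ Subgroup.closure {x | x ∈ ts}) :
    HurwitzEquiv (ts ++ [t, t]) (ts ++ [w * t * w⁻¹, w * t * w⁻¹]) :=
  closure_le_hurwitzPairConjSubgroup ts hw t ht.mul_self

/-- A trailing pair `(t, t)` of equal reflections can be conjugated by any element of the
subgroup generated by the preceding factors, up to Hurwitz equivalence. -/
theorem hurwitzEquiv_append_pair_conj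
    {B W : Type*} [Group W] [Fintype B] {M : CoxeterMatrix B}
    (cs : CoxeterSystem M W) (ts : List W) (t : W)
    (hts : ∀ x ∈ ts, cs.IsReflection x) (ht : cs.IsReflection t)
    (w : W) (hw : w ∈ Subgroup.closure {x | x ∈ ts}) :
    HurwitzEquiv (ts ++ [t, t]) (ts ++ [w * t * w⁻¹, w * t * w⁻¹]) :=
  hurwitzEquiv_append_pair_conj_general cs ts t ht w hw
end

section
/- Let (W,S) be a Coxeter system of finite rank and let r, t ∈ T be reflections. Then the tuple (t, t, r, r) lies in the same Hurwitz orbit as (r, r, t, t). -/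
/-! With `t' = r⁻¹ t r`, four inverse Hurwitz moves
`(x, y) ↦ (y, y⁻¹ x y)` give `(t,t,r,r) → (t,r,t',r) → (r,t',t',r) → (r,t',r,t) → (r,r,t,t)`;
in the last two, conjugating `t'` by `r` returns `t` because `r⁻¹ = r`. -/

namespace HurwitzEquiv

variable {W : Type*} [Group W]

instance : Trans (@HurwitzEquiv W _) HurwitzEquiv HurwitzEquiv :=
  ⟨Relation.ReflTransGen.trans⟩

theorem of_conj_eq (u v : List W) {a b c : W} (h : b * c * b⁻¹ = a) :
    HurwitzEquiv (u ++ a :: b :: v) (u ++ b :: c :: v) :=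
  .single <| .inr ⟨u, v, b, c, rfl, by rw [h]⟩

end HurwitzEquiv

theorem hurwitzEquiv_pair_swap_of_mul_self_eq_one {W : Type*} [Group W] (t r : W)
    (hr : r * r = 1) : HurwitzEquiv [t, t, r, r] [r, r, t, t] := by
  have hr' : r⁻¹ = r := inv_eq_of_mul_eq_one_right hr
  calc HurwitzEquiv [t, t, r, r] [t, r, r⁻¹ * t * r, r] := .of_conj_eq [t] [r] (by group)
    HurwitzEquiv _ [r, r⁻¹ * t * r, r⁻¹ * t * r, r] := .of_conj_eq [] [r⁻¹ * t * r, r] (by group)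
    HurwitzEquiv _ [r, r⁻¹ * t * r, r, t] := .of_conj_eq [r, r⁻¹ * t * r] [] (by rw [hr'])
    HurwitzEquiv _ [r, r, t, t] := .of_conj_eq [r] [t] (by rw [hr'])

theorem hurwitzEquiv_pair_swap_general
    {B W : Type*} [Group W] {M : CoxeterMatrix B}
    (cs : CoxeterSystem M W) (t r : W)
    (hr : cs.IsReflection r) :
    HurwitzEquiv [t, t, r, r] [r, r, t, t] :=
  hurwitzEquiv_pair_swap_of_mul_self_eq_one t r hr.mul_self

/-- For reflections `t` and `r`, the tuple `(t, t, r, r)` lies in the same Hurwitz orbit as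
`(r, r, t, t)`. -/
theorem hurwitzEquiv_pair_swap
    {B W : Type*} [Group W] [Fintype B] {M : CoxeterMatrix B}
    (cs : CoxeterSystem M W) (t r : W)
    (ht : cs.IsReflection t) (hr : cs.IsReflection r) :
    HurwitzEquiv [t, t, r, r] [r, r, t, t] :=
  hurwitzEquiv_pair_swap_general cs t r hr
end
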